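/- For any prime Schröder tree T with n+1 leaves, the number of blocks of the noncrossing partition η(T) equals the number of internal vertices of T. -/
import Mathlib


/-- Plane rooted trees with an arbitrary (ordered) list of subtrees at each
internal vertex. -/
inductive STree : Type
  | leaf : STree
  | node : List STree → STree

namespace STree

/-- A Schröder tree: every internal vertex has at least two children. -/
inductive IsSchroeder : STree → Prop
  | leaf : IsSchroeder .leaf
  | node : ∀ ts : List STree, 2 ≤ ts.length → (∀ t ∈ ts, IsSchroeder t) →
      IsSchroeder (.node ts)

/-- A prime Schröder tree: the rightmost child of the root is a leaf. -/
def IsPrime : STree → Prop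
  | .leaf => False
  | .node ts => ts.getLast? = some .leaf

mutual
/-- Number of leaves of a tree. -/
def leaves : STree → ℕ
  | .leaf => 1
  | .node ts => leavesL ts

def leavesL : List STree → ℕ
  | [] => 0
  | t :: ts => leaves t + leavesL ts
end

mutual
/-- Number of internal vertices of a tree. -/
def internals : STree → ℕ
  | .leaf => 0
  | .node ts => 1 + internalsL ts

def internalsL : List STree → ℕ
  | [] => 0
  | t :: ts => internals t + internalsL ts
end

mutual
/-- `gapLabels t c = (l, c')` where `l` is the list of labels of the gaps between
consecutive leaves of `t` (from left to right): each internal vertex gets a fresh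
identifier (starting from `c`), and the gap between the `i`th and `(i+1)`st leaves
is labelled by the identifier of the vertex whose block (in the sense of the map
`η`, i.e. connectivity above leaf level through middle edges only) contains that
gap, namely the closest common ancestor of the two adjacent leaves.  `c'` is the
next unused identifier. -/
def gapLabels : STree → ℕ → List ℕ × ℕ
  | .leaf, c => ([], c)
  | .node ts, c => gapLabelsL ts (c + 1) c

def gapLabelsL : List STree → ℕ → ℕ → List ℕ × ℕ
  | [], c, _ => ([], c)
  | [t], c, _ => gapLabels t c
  | t :: t' :: ts, c, own =>
      let p := gapLabels t c
      let q := gapLabelsL (t' :: ts) p.2 own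
      (p.1 ++ own :: q.1, q.2)
end

/-- The gap-labelling of a tree: the `i`th entry is the label of the block of
`η(T)` containing `i`. -/
def eta (t : STree) : List ℕ := (gapLabels t 0).1

mutual
theorem gapLabels_snd : ∀ (t : STree) (c : ℕ), (gapLabels t c).2 = c + internals t
  | .leaf, c => by simp [gapLabels, internals]
  | .node ts, c => by
      rw [gapLabels, internals, gapLabelsL_snd ts (c + 1) c]; omega

theorem gapLabelsL_snd : ∀ (ts : List STree) (c own : ℕ),
    (gapLabelsL ts c own).2 = c + internalsL ts
  | [], c, own => by simp [gapLabelsL, internalsL]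
  | [t], c, own => by
      rw [gapLabelsL, internalsL, internalsL, gapLabels_snd]; omega
  | t :: t' :: ts, c, own => by
      simp only [gapLabelsL]
      rw [gapLabelsL_snd (t' :: ts), gapLabels_snd t,
        show internalsL (t :: t' :: ts) = internals t + internalsL (t' :: ts) from by
          rw [internalsL]]
      omega
end

mutual
theorem gapLabels_fst : ∀ (t : STree) (c : ℕ), IsSchroeder t →
    (gapLabels t c).1.toFinset = Finset.Ico c (c + internals t)
  | .leaf, c, _ => by simp [gapLabels, internals]
  | .node ts, c, h => by
      obtain ⟨hlen, hall⟩ : 2 ≤ ts.length ∧ ∀ t ∈ ts, IsSchroeder t := by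
        cases h with | node _ h1 h2 => exact ⟨h1, h2⟩
      rw [gapLabels, internals, gapLabelsL_fst ts (c + 1) c hall]
      rw [if_pos hlen]
      ext x
      simp only [Finset.mem_union, Finset.mem_Ico, Finset.mem_singleton]
      omega

theorem gapLabelsL_fst : ∀ (ts : List STree) (c own : ℕ), (∀ t ∈ ts, IsSchroeder t) →
    (gapLabelsL ts c own).1.toFinset =
      Finset.Ico c (c + internalsL ts) ∪ (if 2 ≤ ts.length then {own} else ∅)
  | [], c, own, _ => by simp [gapLabelsL, internalsL]
  | [t], c, own, h => by
      rw [gapLabelsL, internalsL, internalsL,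
        gapLabels_fst t c (h t (by simp))]
      simp
  | t :: t' :: ts, c, own, h => by
      simp only [gapLabelsL]
      rw [List.toFinset_append, List.toFinset_cons,
        gapLabels_fst t c (h t (by simp)), gapLabels_snd t,
        gapLabelsL_fst (t' :: ts) (c + internals t) own (fun u hu => h u (by simp [hu])),
        show internalsL (t :: t' :: ts) = internals t + internalsL (t' :: ts) from by
          rw [internalsL]]
      have hout : 2 ≤ (t :: t' :: ts).length := by simp
      rw [if_pos hout]
      by_cases h2 : 2 ≤ (t' :: ts).length
      · rw [if_pos h2]
        ext x
        simp only [Finset.mem_union, Finset.mem_Ico, Finset.mem_insert,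
          Finset.mem_singleton]
        omega
      · rw [if_neg h2]
        ext x
        simp only [Finset.union_empty, Finset.mem_union, Finset.mem_Ico,
          Finset.mem_insert, Finset.mem_singleton]
        omega
end

end STree
/-- For a prime Schröder tree `T` with `n+1` leaves, the number of blocks of the
noncrossing partition `η(T)` (the number of distinct gap labels) equals the
number of internal vertices of `T`. -/
theorem card_blocks_eta_eq_internals (n : ℕ) (T : STree)
    (hS : STree.IsSchroeder T) (hP : STree.IsPrime T)
    (hl : STree.leaves T = n + 1) :
    (STree.eta T).toFinset.card = STree.internals T := by
  rw [STree.eta, STree.gapLabels_fst T 0 hS]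
  simp
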